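/- Consider the primal-dual iteration x^{k+1} = A(x^k − γ(∇f(x^k) + ŷ^k)), y^{k+1} = y^k + τ B x^{k+1}, ŷ^{k+1} = 2y^{k+1} − y^k for k ≥ 1, initialized with an arbitrary x¹ ∈ ℝ^{m×d}, y¹ = 0 and ŷ¹ = τ B x¹. Assume (1 − γL_f)I − γτB ⪰ 0 and that there exists λ₂ > 0 with ⟨Bz, z⟩ ≥ λ₂‖z‖² for all z ∈ C^⊥. Let x* be a minimizer of f over C. Then for every integer T ≥ 2, the ergodic average x̄^T = (1/(T−1)) Σ_{k=2}^T x^k satisfies G(x̄^T, x*) ≤ (1/(T−1)) ( ‖x¹ − x*‖²/(2γ) + ‖∇f(x*)‖²/(2τλ₂) ). -/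

import Mathlib

/-- Frobenius inner product on real m×d matrices. -/
noncomputable def ip {m d : ℕ} (x y : Matrix (Fin m) (Fin d) ℝ) : ℝ :=
  ∑ i, ∑ j, x i j * y i j

/-- The consensus subspace C = {1ₘ xᵀ : x ∈ ℝᵈ}. -/
def cC (m d : ℕ) : Set (Matrix (Fin m) (Fin d) ℝ) :=
  {x | ∃ v : Fin d → ℝ, ∀ i j, x i j = v j}

/-- The orthogonal complement C^⊥ = {y : 1ₘᵀ y = 0}. -/
def cPerp (m d : ℕ) : Set (Matrix (Fin m) (Fin d) ℝ) :=
  {y | ∀ j, ∑ i, y i j = 0}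

/-- The Bregman distance G(x, x*) = f(x) − f(x*) − ⟨∇f(x*), x − x*⟩. -/
noncomputable def breg {m d : ℕ} (f : Matrix (Fin m) (Fin d) ℝ → ℝ)
    (gf : Matrix (Fin m) (Fin d) ℝ → Matrix (Fin m) (Fin d) ℝ)
    (x xs : Matrix (Fin m) (Fin d) ℝ) : ℝ :=
  f x - f xs - ip (gf xs) (x - xs)

/-!
Let `w ∈ C^⊥` solve `B w = ∇f(x*)`; it exists because `∇f(x*) ∈ C^⊥` by optimality and `B` is
invertible on `C^⊥` by the lower bound `λ₂`. Then `u_k = w + τ ∑_{j=2}^k x^j` satisfies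
`B u_k = y^k - y*` with `y* = -∇f(x*)`, and the energy `‖x^k - x*‖²/(2γ) + ⟨B u_k, u_k⟩/(2τ)`
drops by at least `G(x^{k+1}, x*)` at each step: the gradient step is controlled by convexity and
`L_f`-smoothness, the mixing step by `(I - A) A ⪰ 0`, and the remaining quadratic terms by
`(1 - γL_f) I - γτB ⪰ 0`. Summing telescopes, and Jensen's inequality for the convex function
`G(·, x*)` passes to the ergodic average. The initial energy is bounded using
`⟨B w, w⟩ ≤ ‖B w‖²/λ₂`.
-/

open Matrix Finset Set

section FrobeniusInner

variable {m d : ℕ}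

lemma ip_comm (x y : Matrix (Fin m) (Fin d) ℝ) : ip x y = ip y x := by
  simp only [ip, mul_comm]

lemma ip_add_left (x y z : Matrix (Fin m) (Fin d) ℝ) : ip (x + y) z = ip x z + ip y z := by
  simp only [ip, Matrix.add_apply, add_mul, sum_add_distrib]

lemma ip_sub_left (x y z : Matrix (Fin m) (Fin d) ℝ) : ip (x - y) z = ip x z - ip y z := by
  simp only [ip, Matrix.sub_apply, sub_mul, sum_sub_distrib]

lemma ip_smul_left (c : ℝ) (x z : Matrix (Fin m) (Fin d) ℝ) : ip (c • x) z = c * ip x z := by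
  simp only [ip, Matrix.smul_apply, smul_eq_mul, mul_sum, mul_assoc]

lemma ip_add_right (x y z : Matrix (Fin m) (Fin d) ℝ) : ip z (x + y) = ip z x + ip z y := by
  rw [ip_comm, ip_add_left, ip_comm x, ip_comm y]

lemma ip_sub_right (x y z : Matrix (Fin m) (Fin d) ℝ) : ip z (x - y) = ip z x - ip z y := by
  rw [ip_comm, ip_sub_left, ip_comm x, ip_comm y]

lemma ip_smul_right (c : ℝ) (x z : Matrix (Fin m) (Fin d) ℝ) : ip z (c • x) = c * ip z x := by
  rw [ip_comm, ip_smul_left, ip_comm x]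

lemma ip_zero_right (z : Matrix (Fin m) (Fin d) ℝ) : ip z 0 = 0 := by
  simp only [ip, Matrix.zero_apply, mul_zero, sum_const_zero]

lemma ip_self_nonneg (x : Matrix (Fin m) (Fin d) ℝ) : 0 ≤ ip x x :=
  sum_nonneg fun _ _ => sum_nonneg fun _ _ => mul_self_nonneg _

lemma ip_self_eq_zero {x : Matrix (Fin m) (Fin d) ℝ} : ip x x = 0 ↔ x = 0 := by
  refine ⟨fun h => ?_, fun h => h ▸ ip_zero_right 0⟩
  ext i j
  have hrow := (sum_eq_zero_iff_of_nonneg fun i _ =>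
    sum_nonneg fun j _ => mul_self_nonneg (x i j)).1 h i (mem_univ i)
  exact mul_self_eq_zero.1 <|
    (sum_eq_zero_iff_of_nonneg fun j _ => mul_self_nonneg (x i j)).1 hrow j (mem_univ j)

lemma two_mul_ip_sub_sub (a b c : Matrix (Fin m) (Fin d) ℝ) :
    2 * ip (a - b) (b - c) = ip (a - c) (a - c) - ip (b - c) (b - c) - ip (b - a) (b - a) := by
  simp only [ip, Matrix.sub_apply, mul_sum, ← sum_sub_distrib]
  exact sum_congr rfl fun _ _ => sum_congr rfl fun _ _ => by ring

lemma ip_mul_left (M : Matrix (Fin m) (Fin m) ℝ) (x y : Matrix (Fin m) (Fin d) ℝ) :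
    ip (M * x) y = ip x (Mᵀ * y) := by
  have htrace : ∀ x y : Matrix (Fin m) (Fin d) ℝ, ip x y = trace (xᵀ * y) := fun x y => by
    simp only [ip, trace, diag_apply, mul_apply, transpose_apply]
    exact sum_comm
  rw [htrace, htrace, transpose_mul, Matrix.mul_assoc]

lemma Matrix.IsHermitian.ip_mul_left {M : Matrix (Fin m) (Fin m) ℝ} (hM : M.IsHermitian)
    (x y : Matrix (Fin m) (Fin d) ℝ) : ip (M * x) y = ip x (M * y) := by
  rw [_root_.ip_mul_left, ← conjTranspose_eq_transpose_of_trivial, hM.eq]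

lemma Matrix.IsHermitian.ip_mul_comm {M : Matrix (Fin m) (Fin m) ℝ} (hM : M.IsHermitian)
    (x y : Matrix (Fin m) (Fin d) ℝ) : ip (M * x) y = ip (M * y) x := by
  rw [hM.ip_mul_left, ip_comm]

lemma Matrix.PosSemidef.ip_mul_self_nonneg {M : Matrix (Fin m) (Fin m) ℝ} (hM : M.PosSemidef)
    (z : Matrix (Fin m) (Fin d) ℝ) : 0 ≤ ip (M * z) z := by
  have hcol : ip (M * z) z = ∑ j, (fun i => z i j) ⬝ᵥ M *ᵥ (fun i => z i j) := by
    simp only [ip, dotProduct, mulVec, mul_apply]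
    rw [sum_comm]
    exact sum_congr rfl fun _ _ => sum_congr rfl fun _ _ => by ring
  rw [hcol]
  exact sum_nonneg fun j _ => by simpa using hM.dotProduct_mulVec_nonneg (fun i => z i j)

end FrobeniusInner

section Consensus

variable {m d : ℕ}

lemma mul_eq_zero_of_mem_cC {M : Matrix (Fin m) (Fin m) ℝ} (hM1 : M *ᵥ (fun _ => (1 : ℝ)) = 0)
    {c : Matrix (Fin m) (Fin d) ℝ} (hc : c ∈ cC m d) : M * c = 0 := by
  obtain ⟨v, hv⟩ := hc
  ext i j
  have hrow : ∑ k, M i k = 0 := by simpa [mulVec, dotProduct] using congrFun hM1 i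
  simp only [mul_apply, hv, ← sum_mul, hrow, zero_mul, Matrix.zero_apply]

lemma mul_mem_cPerp {M : Matrix (Fin m) (Fin m) ℝ} (hM : M.IsHermitian)
    (hM1 : M *ᵥ (fun _ => (1 : ℝ)) = 0) (z : Matrix (Fin m) (Fin d) ℝ) : M * z ∈ cPerp m d := by
  intro j
  have hcol : ∀ k, ∑ i, M i k = 0 := fun k => by
    simpa [mulVec, dotProduct, ← hM.apply k] using congrFun hM1 k
  simp only [mul_apply]
  rw [sum_comm]
  exact sum_eq_zero fun k _ => by rw [← sum_mul, hcol k, zero_mul]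

def cPerpSubmodule (m d : ℕ) : Submodule ℝ (Matrix (Fin m) (Fin d) ℝ) where
  carrier := cPerp m d
  add_mem' ha hb j := by simp only [Matrix.add_apply, sum_add_distrib, ha j, hb j, add_zero]
  zero_mem' j := by simp only [Matrix.zero_apply, sum_const_zero]
  smul_mem' c _ ha j := by simp only [Matrix.smul_apply, smul_eq_mul, ← mul_sum, ha j, mul_zero]

/-- Coercivity makes `B` injective on `C^⊥`, which it maps into itself; by finite dimension it is
then onto `C^⊥`. -/
lemma exists_mem_cPerp_mul_eq {B : Matrix (Fin m) (Fin m) ℝ} (hB : B.IsHermitian)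
    (hB1 : B *ᵥ (fun _ => (1 : ℝ)) = 0) {lam2 : ℝ} (hlam2 : 0 < lam2)
    (hBlow : ∀ z ∈ cPerp m d, lam2 * ip z z ≤ ip (B * z) z)
    {g : Matrix (Fin m) (Fin d) ℝ} (hg : g ∈ cPerp m d) : ∃ w ∈ cPerp m d, B * w = g := by
  let L : cPerpSubmodule m d →ₗ[ℝ] cPerpSubmodule m d :=
    (mulLeftLinearMap (Fin d) ℝ B).restrict fun z _ => mul_mem_cPerp hB hB1 z
  have hinj : Function.Injective L := by
    rw [← LinearMap.ker_eq_bot, LinearMap.ker_eq_bot']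
    intro z hz
    have hBz : B * (z : Matrix (Fin m) (Fin d) ℝ) = 0 := congrArg Subtype.val hz
    have hle := hBlow z z.2
    rw [hBz, ip_comm 0, ip_zero_right] at hle
    have hzz : ip (z : Matrix (Fin m) (Fin d) ℝ) z = 0 :=
      le_antisymm (nonpos_of_mul_nonpos_right hle hlam2) (ip_self_nonneg _)
    exact Subtype.ext (ip_self_eq_zero.1 hzz)
  obtain ⟨w, hw⟩ := LinearMap.injective_iff_surjective.1 hinj ⟨g, hg⟩
  exact ⟨w, w.2, congrArg Subtype.val hw⟩

end Consensus

section Gradient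

variable {m d : ℕ} {f : Matrix (Fin m) (Fin d) ℝ → ℝ}
  {gf : Matrix (Fin m) (Fin d) ℝ → Matrix (Fin m) (Fin d) ℝ}

lemma add_ip_le_of_convexOn (hconv : ConvexOn ℝ univ f)
    (hgrad : ∀ x v, HasDerivAt (fun t : ℝ => f (x + t • v)) (ip (gf x) v) 0)
    (z w : Matrix (Fin m) (Fin d) ℝ) : f z + ip (gf z) (w - z) ≤ f w := by
  have hline : ConvexOn ℝ univ (fun t : ℝ => f (z + t • (w - z))) := by
    simpa [Function.comp_def, AffineMap.lineMap_apply_module', add_comm] using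
      hconv.comp_affineMap (AffineMap.lineMap z w)
  have hslope := hline.le_slope_of_hasDerivAt (mem_univ 0) (mem_univ 1) zero_lt_one
    (hgrad z (w - z))
  simp only [slope_def_field, one_smul, zero_smul, add_zero, add_sub_cancel, sub_zero,
    div_one] at hslope
  linarith

lemma gf_mem_cPerp_of_isMinOn
    (hgrad : ∀ x v, HasDerivAt (fun t : ℝ => f (x + t • v)) (ip (gf x) v) 0)
    {xs : Matrix (Fin m) (Fin d) ℝ} (hxs : xs ∈ cC m d) (hmin : IsMinOn f (cC m d) xs) :
    gf xs ∈ cPerp m d := by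
  obtain ⟨v, hv⟩ := hxs
  intro j
  let e : Matrix (Fin m) (Fin d) ℝ := Matrix.of fun _ j' => if j' = j then 1 else 0
  have hloc : IsLocalMin (fun t : ℝ => f (xs + t • e)) 0 := Filter.Eventually.of_forall fun t => by
    simpa using isMinOn_iff.1 hmin _
      ⟨fun j' => v j' + t * if j' = j then 1 else 0, fun i j' => by simp [e, hv]⟩
  simpa [ip, e] using hloc.hasDerivAt_eq_zero (hgrad xs e)

end Gradient

section Step

variable {m d : ℕ} {f : Matrix (Fin m) (Fin d) ℝ → ℝ}
  {gf : Matrix (Fin m) (Fin d) ℝ → Matrix (Fin m) (Fin d) ℝ} {A B : Matrix (Fin m) (Fin m) ℝ}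
  {xs : Matrix (Fin m) (Fin d) ℝ}

/-- `A` and `1 - A` commute and are positive semidefinite, so `A (1 - A) ⪰ 0`. -/
lemma ip_sub_mul_mul_sub_nonneg (hA : A.PosSemidef) (hIA : (1 - A).PosSemidef)
    (hA1 : (1 - A) *ᵥ (fun _ => (1 : ℝ)) = 0) (hxs : xs ∈ cC m d) (s : Matrix (Fin m) (Fin d) ℝ) :
    0 ≤ ip (s - A * s) (A * s - xs) := by
  have hsub : s - A * s = (1 - A) * s := by rw [Matrix.sub_mul, Matrix.one_mul]
  have hprod : (A * (1 - A)).PosSemidef := by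
    open scoped MatrixOrder in
    exact (Commute.mul_nonneg hA.nonneg hIA.nonneg ((Commute.one_right A).sub_right
      (Commute.refl A))).posSemidef
  have hxs0 : ip ((1 - A) * s) xs = 0 := by
    rw [hIA.isHermitian.ip_mul_left, mul_eq_zero_of_mem_cC hA1 hxs, ip_zero_right]
  rw [hsub, ip_sub_right, hxs0, sub_zero, ← hA.isHermitian.ip_mul_left, ← Matrix.mul_assoc]
  exact hprod.ip_mul_self_nonneg s

lemma primal_step (hconv : ConvexOn ℝ univ f)
    (hgrad : ∀ x v, HasDerivAt (fun t : ℝ => f (x + t • v)) (ip (gf x) v) 0) {L_f : ℝ}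
    (hsmooth : ∀ z w, f w ≤ f z + ip (gf z) (w - z) + L_f / 2 * ip (w - z) (w - z))
    (hA : A.PosSemidef) (hIA : (1 - A).PosSemidef) (hA1 : (1 - A) *ᵥ (fun _ => (1 : ℝ)) = 0)
    (hxs : xs ∈ cC m d) {γ : ℝ} (hγ : 0 ≤ γ) {p h q : Matrix (Fin m) (Fin d) ℝ}
    (hq : q = A * (p - γ • (gf p + h))) :
    2 * γ * (f q - f xs + ip h (q - xs)) ≤
      ip (p - xs) (p - xs) - ip (q - xs) (q - xs) - (1 - γ * L_f) * ip (q - p) (q - p) := by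
  set s := p - γ • (gf p + h)
  have hdescent : f q - f xs ≤ ip (gf p) (q - xs) + L_f / 2 * ip (q - p) (q - p) := by
    have hsplit : ip (gf p) (q - p) - ip (gf p) (xs - p) = ip (gf p) (q - xs) := by
      rw [← ip_sub_right, sub_sub_sub_cancel_right]
    linarith [hsmooth p q, add_ip_le_of_convexOn hconv hgrad p xs]
  have hproj : 0 ≤ ip (s - q) (q - xs) := hq ▸ ip_sub_mul_mul_sub_nonneg hA hIA hA1 hxs s
  have hdecomp : ip (p - q) (q - xs) =
      γ * (ip (gf p) (q - xs) + ip h (q - xs)) + ip (s - q) (q - xs) := by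
    rw [show p - q = γ • (gf p + h) + (s - q) by simp only [s]; abel, ip_add_left, ip_smul_left,
      ip_add_left]
  have hpolar := two_mul_ip_sub_sub p q xs
  linarith [mul_le_mul_of_nonneg_left hdescent hγ]

lemma Matrix.IsHermitian.two_mul_ip_add_smul_mul (hB : B.IsHermitian) (τ : ℝ)
    (u p q : Matrix (Fin m) (Fin d) ℝ) :
    2 * τ * ip (B * u + τ • (B * p)) q = ip (B * (u + τ • q)) (u + τ • q) - ip (B * u) u
      + τ ^ 2 * (ip (B * p) p - ip (B * (q - p)) (q - p)) := by
  simp only [Matrix.mul_add, Matrix.mul_sub, Matrix.mul_smul, ip_add_left, ip_add_right,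
    ip_sub_left, ip_sub_right, ip_smul_left, ip_smul_right]
  rw [hB.ip_mul_comm q u, hB.ip_mul_comm q p]
  ring

end Step

section Energy

variable {m d : ℕ} {f : Matrix (Fin m) (Fin d) ℝ → ℝ}
  {gf : Matrix (Fin m) (Fin d) ℝ → Matrix (Fin m) (Fin d) ℝ} {A B : Matrix (Fin m) (Fin m) ℝ}
  {xs : Matrix (Fin m) (Fin d) ℝ} {γ τ : ℝ}

noncomputable def primalDualEnergy (B : Matrix (Fin m) (Fin m) ℝ) (γ τ : ℝ)
    (xs x u : Matrix (Fin m) (Fin d) ℝ) : ℝ :=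
  ip (x - xs) (x - xs) / (2 * γ) + ip (B * u) u / (2 * τ)

lemma primalDualEnergy_nonneg (hB : B.PosSemidef) (hγ : 0 < γ) (hτ : 0 < τ)
    (x u : Matrix (Fin m) (Fin d) ℝ) : 0 ≤ primalDualEnergy B γ τ xs x u :=
  add_nonneg (div_nonneg (ip_self_nonneg _) (by positivity))
    (div_nonneg (hB.ip_mul_self_nonneg u) (by positivity))

lemma ip_mul_self_le_div_of_coercive {lam2 : ℝ} (hlam2 : 0 < lam2)
    {w : Matrix (Fin m) (Fin d) ℝ} (hw : lam2 * ip w w ≤ ip (B * w) w) :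
    ip (B * w) w ≤ ip (B * w) (B * w) / lam2 := by
  have hsq := ip_self_nonneg (B * w - lam2 • w)
  simp only [ip_sub_left, ip_sub_right, ip_smul_left, ip_smul_right, ip_comm w (B * w)] at hsq
  rw [le_div_iff₀ hlam2]
  linarith [mul_le_mul_of_nonneg_left hw hlam2.le]

lemma primalDualEnergy_le_of_coercive (hτ : 0 < τ) {lam2 : ℝ} (hlam2 : 0 < lam2)
    {w : Matrix (Fin m) (Fin d) ℝ} (hw : lam2 * ip w w ≤ ip (B * w) w)
    (x : Matrix (Fin m) (Fin d) ℝ) : primalDualEnergy B γ τ xs x w ≤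
      ip (x - xs) (x - xs) / (2 * γ) + ip (B * w) (B * w) / (2 * τ * lam2) := by
  have hdual := ip_mul_self_le_div_of_coercive hlam2 hw
  rw [primalDualEnergy, show 2 * τ * lam2 = lam2 * (2 * τ) by ring,
    ← div_div (ip (B * w) (B * w))]
  gcongr

lemma breg_le_primalDualEnergy_sub (hconv : ConvexOn ℝ univ f)
    (hgrad : ∀ x v, HasDerivAt (fun t : ℝ => f (x + t • v)) (ip (gf x) v) 0) {L_f : ℝ}
    (hsmooth : ∀ z w, f w ≤ f z + ip (gf z) (w - z) + L_f / 2 * ip (w - z) (w - z))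
    (hA : A.PosSemidef) (hIA : (1 - A).PosSemidef) (hA1 : (1 - A) *ᵥ (fun _ => (1 : ℝ)) = 0)
    (hB : B.PosSemidef) (hB1 : B *ᵥ (fun _ => (1 : ℝ)) = 0) (hγ : 0 < γ) (hτ : 0 < τ)
    (hPSD : ((1 - γ * L_f) • (1 : Matrix (Fin m) (Fin m) ℝ) - (γ * τ) • B).PosSemidef)
    (hxs : xs ∈ cC m d) {p u q : Matrix (Fin m) (Fin d) ℝ}
    (hq : q = A * (p - γ • (gf p + (B * u - gf xs + τ • (B * p))))) :
    breg f gf q xs ≤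
      primalDualEnergy B γ τ xs p u - primalDualEnergy B γ τ xs q (u + τ • q) := by
  have hprimal := primal_step hconv hgrad hsmooth hA hIA hA1 hxs hγ.le hq
  have hdual := hB.isHermitian.two_mul_ip_add_smul_mul τ u p q
  have hcross : ip (B * u - gf xs + τ • (B * p)) (q - xs) =
      ip (B * u + τ • (B * p)) q - ip (gf xs) (q - xs) := by
    have hBxs : ip (B * u + τ • (B * p)) xs = 0 := by
      rw [← Matrix.mul_smul, ← Matrix.mul_add, hB.isHermitian.ip_mul_left,
        mul_eq_zero_of_mem_cC hB1 hxs, ip_zero_right]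
    rw [sub_add_eq_add_sub, ip_sub_left, ip_sub_right, hBxs, sub_zero]
  have hstep : 0 ≤ (1 - γ * L_f) * ip (q - p) (q - p) - γ * τ * ip (B * (q - p)) (q - p) := by
    simpa only [Matrix.sub_mul, Matrix.smul_mul, Matrix.one_mul, ip_sub_left, ip_smul_left]
      using hPSD.ip_mul_self_nonneg (q - p)
  have hBp := hB.ip_mul_self_nonneg p
  have hscaled : 2 * γ * τ * breg f gf q xs ≤
      2 * γ * τ * (primalDualEnergy B γ τ xs p u - primalDualEnergy B γ τ xs q (u + τ • q)) := by
    have hexpand : 2 * γ * τ * (primalDualEnergy B γ τ xs p u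
        - primalDualEnergy B γ τ xs q (u + τ • q)) = τ * (ip (p - xs) (p - xs)
          - ip (q - xs) (q - xs)) + γ * (ip (B * u) u - ip (B * (u + τ • q)) (u + τ • q)) := by
      unfold primalDualEnergy
      field_simp
      ring
    rw [hexpand, breg]
    rw [hcross] at hprimal
    linear_combination τ * hprimal - γ * hdual + τ * hstep + γ * τ ^ 2 * hBp
  exact le_of_mul_le_mul_left hscaled (by positivity)

end Energy

section Averaging

lemma ConvexOn.map_finset_average_le {E ι : Type*} [AddCommGroup E] [Module ℝ E] {φ : E → ℝ}
    (hφ : ConvexOn ℝ univ φ) {t : Finset ι} (ht : t.Nonempty) (p : ι → E) :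
    φ ((1 / (#t : ℝ)) • ∑ i ∈ t, p i) ≤ (1 / #t) * ∑ i ∈ t, φ (p i) := by
  have hw : ∑ _i ∈ t, (1 / (#t : ℝ)) = 1 := by
    rw [sum_const, nsmul_eq_mul, mul_one_div_cancel (Nat.cast_ne_zero.2 ht.card_pos.ne')]
  simpa only [smul_sum, smul_eq_mul, mul_sum] using
    hφ.map_sum_le (fun _ _ => by positivity) hw (fun _ _ => mem_univ _)

lemma sum_Icc_add_le_of_le_sub {a V : ℕ → ℝ} (h : ∀ k ≥ 1, a (k + 1) ≤ V k - V (k + 1))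
    {T : ℕ} (hT : 1 ≤ T) : ∑ k ∈ Icc 2 T, a k + V T ≤ V 1 := by
  induction T, hT using Nat.le_induction with
  | base => simp
  | succ n hn ih =>
    rw [sum_Icc_succ_top (by omega)]
    linarith [h n hn]

variable {m d : ℕ}

lemma convexOn_breg {f : Matrix (Fin m) (Fin d) ℝ → ℝ} (hconv : ConvexOn ℝ univ f)
    (gf : Matrix (Fin m) (Fin d) ℝ → Matrix (Fin m) (Fin d) ℝ) (xs : Matrix (Fin m) (Fin d) ℝ) :
    ConvexOn ℝ univ fun x => breg f gf x xs := by
  refine ⟨convex_univ, fun x _ z _ a b ha hb hab => ?_⟩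
  have hlin : ip (gf xs) (a • x + b • z - xs) =
      a * ip (gf xs) (x - xs) + b * ip (gf xs) (z - xs) := by
    rw [← ip_smul_right, ← ip_smul_right, ← ip_add_right, smul_sub, smul_sub,
      sub_add_sub_comm, ← add_smul, hab, one_smul]
  have hf := hconv.2 (mem_univ x) (mem_univ z) ha hb hab
  simp only [breg, smul_eq_mul, hlin]
  linear_combination hf + f xs * hab

end Averaging

section Iterates

variable {m d : ℕ}

lemma yh_eq_mul_sub_add {B : Matrix (Fin m) (Fin m) ℝ} {τ : ℝ} {w g : Matrix (Fin m) (Fin d) ℝ}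
    (hBw : B * w = g) {x y yh : ℕ → Matrix (Fin m) (Fin d) ℝ} (hy1 : y 1 = 0)
    (hyh1 : yh 1 = τ • (B * x 1)) (hy : ∀ k ≥ 1, y (k + 1) = y k + τ • (B * x (k + 1)))
    (hyh : ∀ k ≥ 1, yh (k + 1) = (2 : ℝ) • y (k + 1) - y k) {k : ℕ} (hk : 1 ≤ k) :
    yh k = B * (w + τ • ∑ j ∈ Icc 2 k, x j) - g + τ • (B * x k) := by
  have hy_eq : ∀ k ≥ 1, y k = B * (w + τ • ∑ j ∈ Icc 2 k, x j) - g := by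
    intro k hk
    induction k, hk using Nat.le_induction with
    | base => simp [hy1, hBw]
    | succ n hn ih =>
      rw [hy n hn, ih, sum_Icc_succ_top (by omega)]
      simp only [smul_add, Matrix.mul_add, Matrix.mul_smul]
      abel
  rw [← hy_eq k hk]
  induction k, hk using Nat.le_induction with
  | base => rw [hyh1, hy1, zero_add]
  | succ n hn _ =>
    rw [hyh n hn, hy n hn]
    module

end Iterates

theorem stmt_9_general {m d : ℕ} (f : Matrix (Fin m) (Fin d) ℝ → ℝ)
    (gf : Matrix (Fin m) (Fin d) ℝ → Matrix (Fin m) (Fin d) ℝ)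
    (L_f : ℝ)
    (hconv : ConvexOn ℝ Set.univ f)
    (hgrad : ∀ x v : Matrix (Fin m) (Fin d) ℝ,
      HasDerivAt (fun t : ℝ => f (x + t • v)) (ip (gf x) v) 0)
    (hsmooth : ∀ z w : Matrix (Fin m) (Fin d) ℝ,
      f w ≤ f z + ip (gf z) (w - z) + L_f / 2 * ip (w - z) (w - z))
    (A B : Matrix (Fin m) (Fin m) ℝ)
    (hA : A.PosSemidef) (hIA : ((1 : Matrix (Fin m) (Fin m) ℝ) - A).PosSemidef)
    (hA1 : ((1 : Matrix (Fin m) (Fin m) ℝ) - A).mulVec (fun _ => (1 : ℝ)) = 0)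
    (hB : B.PosSemidef) (hB1 : B.mulVec (fun _ => (1 : ℝ)) = 0)
    (γ τ : ℝ) (hγ : 0 < γ) (hτ : 0 < τ)
    (hPSD : ((1 - γ * L_f) • (1 : Matrix (Fin m) (Fin m) ℝ) - (γ * τ) • B).PosSemidef)
    (lam2 : ℝ) (hlam2 : 0 < lam2)
    (hBlow : ∀ z ∈ cPerp m d, lam2 * ip z z ≤ ip (B * z) z)
    (x y yh : ℕ → Matrix (Fin m) (Fin d) ℝ)
    (hy1 : y 1 = 0) (hyh1 : yh 1 = τ • (B * x 1))
    (hx : ∀ k ≥ 1, x (k + 1) = A * (x k - γ • (gf (x k) + yh k)))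
    (hy : ∀ k ≥ 1, y (k + 1) = y k + τ • (B * x (k + 1)))
    (hyh : ∀ k ≥ 1, yh (k + 1) = (2 : ℝ) • y (k + 1) - y k)
    (xs : Matrix (Fin m) (Fin d) ℝ)
    (hxsC : xs ∈ cC m d) (hxsMin : ∀ z ∈ cC m d, f xs ≤ f z)
    (T : ℕ) (hT : 2 ≤ T) :
    breg f gf ((1 / ((T : ℝ) - 1)) • ∑ k ∈ Finset.Icc 2 T, x k) xs ≤
      (1 / ((T : ℝ) - 1)) *
        (ip (x 1 - xs) (x 1 - xs) / (2 * γ) +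
          ip (gf xs) (gf xs) / (2 * τ * lam2)) := by
  obtain ⟨w, hw, hBw⟩ := exists_mem_cPerp_mul_eq hB.isHermitian hB1 hlam2 hBlow
    (gf_mem_cPerp_of_isMinOn hgrad hxsC (isMinOn_iff.2 hxsMin))
  let u (k : ℕ) := w + τ • ∑ j ∈ Icc 2 k, x j
  let E (k : ℕ) := primalDualEnergy B γ τ xs (x k) (u k)
  have hdecrease : ∀ k ≥ 1, breg f gf (x (k + 1)) xs ≤ E k - E (k + 1) := fun k hk => by
    have hu : u (k + 1) = u k + τ • x (k + 1) := by
      simp only [u, sum_Icc_succ_top (by omega : 2 ≤ k + 1), smul_add, add_assoc]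
    simp only [E, hu]
    refine breg_le_primalDualEnergy_sub hconv hgrad hsmooth hA hIA hA1 hB hB1 hγ hτ hPSD hxsC ?_
    rw [hx k hk, yh_eq_mul_sub_add hBw hy1 hyh1 hy hyh hk]
  have htelescope :=
    sum_Icc_add_le_of_le_sub (a := fun k => breg f gf (x k) xs) hdecrease (by omega : 1 ≤ T)
  have hE1 : E 1 ≤ ip (x 1 - xs) (x 1 - xs) / (2 * γ) + ip (gf xs) (gf xs) / (2 * τ * lam2) := by
    simpa [E, u, hBw] using primalDualEnergy_le_of_coercive hτ hlam2 (hBlow w hw) (x 1)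
  have hcard : (#(Icc 2 T) : ℝ) = T - 1 := by
    rw [Nat.card_Icc, Nat.cast_sub (by omega)]
    push_cast
    ring
  calc breg f gf ((1 / ((T : ℝ) - 1)) • ∑ k ∈ Icc 2 T, x k) xs
      ≤ 1 / ((T : ℝ) - 1) * ∑ k ∈ Icc 2 T, breg f gf (x k) xs := by
        simpa only [hcard] using (convexOn_breg hconv gf xs).map_finset_average_le
          (nonempty_Icc.2 hT) x
    _ ≤ _ := by
        gcongr
        · exact one_div_nonneg.2 (by rw [← hcard]; positivity)
        · linarith [primalDualEnergy_nonneg (xs := xs) hB hγ hτ (x T) (u T)]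

/-- ergodic O(1/T) rate of the (non-accelerated) primal-dual
method in the Bregman distance. -/
theorem stmt_9 {m d : ℕ} (f : Matrix (Fin m) (Fin d) ℝ → ℝ)
    (gf : Matrix (Fin m) (Fin d) ℝ → Matrix (Fin m) (Fin d) ℝ)
    (L_f : ℝ) (hLf : 0 < L_f)
    (hconv : ConvexOn ℝ Set.univ f)
    (hgrad : ∀ x v : Matrix (Fin m) (Fin d) ℝ,
      HasDerivAt (fun t : ℝ => f (x + t • v)) (ip (gf x) v) 0)
    (hsmooth : ∀ z w : Matrix (Fin m) (Fin d) ℝ,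
      f w ≤ f z + ip (gf z) (w - z) + L_f / 2 * ip (w - z) (w - z))
    (A B : Matrix (Fin m) (Fin m) ℝ)
    (hA : A.PosSemidef) (hIA : ((1 : Matrix (Fin m) (Fin m) ℝ) - A).PosSemidef)
    (hA1 : ((1 : Matrix (Fin m) (Fin m) ℝ) - A).mulVec (fun _ => (1 : ℝ)) = 0)
    (hB : B.PosSemidef) (hB1 : B.mulVec (fun _ => (1 : ℝ)) = 0)
    (γ τ : ℝ) (hγ : 0 < γ) (hτ : 0 < τ)
    (hPSD : ((1 - γ * L_f) • (1 : Matrix (Fin m) (Fin m) ℝ) - (γ * τ) • B).PosSemidef)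
    (lam2 : ℝ) (hlam2 : 0 < lam2)
    (hBlow : ∀ z ∈ cPerp m d, lam2 * ip z z ≤ ip (B * z) z)
    (x y yh : ℕ → Matrix (Fin m) (Fin d) ℝ)
    (hy1 : y 1 = 0) (hyh1 : yh 1 = τ • (B * x 1))
    (hx : ∀ k ≥ 1, x (k + 1) = A * (x k - γ • (gf (x k) + yh k)))
    (hy : ∀ k ≥ 1, y (k + 1) = y k + τ • (B * x (k + 1)))
    (hyh : ∀ k ≥ 1, yh (k + 1) = (2 : ℝ) • y (k + 1) - y k)
    (xs : Matrix (Fin m) (Fin d) ℝ)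
    (hxsC : xs ∈ cC m d) (hxsMin : ∀ z ∈ cC m d, f xs ≤ f z)
    (T : ℕ) (hT : 2 ≤ T) :
    breg f gf ((1 / ((T : ℝ) - 1)) • ∑ k ∈ Finset.Icc 2 T, x k) xs ≤
      (1 / ((T : ℝ) - 1)) *
        (ip (x 1 - xs) (x 1 - xs) / (2 * γ) +
          ip (gf xs) (gf xs) / (2 * τ * lam2)) :=
  stmt_9_general f gf L_f hconv hgrad hsmooth A B hA hIA hA1 hB hB1 γ τ hγ hτ hPSD lam2 hlam2 hBlow
    x y yh hy1 hyh1 hx hy hyh xs hxsC hxsMin T hT
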